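/- For a scalar circularly symmetric complex Gaussian random variable H with mean d and unit variance, E[log|H|²] = log|d|² − Ei(−|d|²) for d ≠ 0. -/

import Mathlib

open MeasureTheory Real Set
open scoped Real ENNReal

/-- Density on `ℂ ≅ ℝ²` of a circularly symmetric complex Gaussian with variance `s`. -/
noncomputable def gaussDensity (s : ℝ) (z : ℂ) : ℝ :=
  (Real.pi * s)⁻¹ * Real.exp (-(‖z‖) ^ 2 / s)

/-- The law of a zero-mean circularly symmetric complex Gaussian with variance `s`. -/
noncomputable def complexGaussian (s : ℝ) : Measure ℂ :=
  volume.withDensity fun z => ENNReal.ofReal (gaussDensity s z)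

/-- The exponential integral `Ei x = −∫_{−x}^∞ e^{−t}/t dt` (for `x < 0`). -/
noncomputable def Ei (x : ℝ) : ℝ := -∫ t in Set.Ioi (-x), Real.exp (-t) / t



theorem lintegral_comp_polarCoord_symm' (g : ℝ × ℝ → ℝ≥0∞) :
    (∫⁻ p in polarCoord.target, ENNReal.ofReal p.1 * g (polarCoord.symm p)) = ∫⁻ p, g p := by
  set B : ℝ × ℝ → ℝ × ℝ →L[ℝ] ℝ × ℝ := fun p =>
    LinearMap.toContinuousLinearMap (Matrix.toLin (Module.Basis.finTwoProd ℝ) (Module.Basis.finTwoProd ℝ)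
      !![Real.cos p.2, -p.1 * Real.sin p.2; Real.sin p.2, p.1 * Real.cos p.2])
  have A : ∀ p ∈ polarCoord.target, HasFDerivWithinAt polarCoord.symm (B p) polarCoord.target p :=
    fun p _ => (hasFDerivAt_polarCoord_symm p).hasFDerivWithinAt
  have B_det : ∀ p, (B p).det = p.1 := by
    intro p
    conv_rhs => rw [← one_mul p.1, ← cos_sq_add_sin_sq p.2]
    simp only [B, neg_mul, LinearMap.det_toContinuousLinearMap, LinearMap.det_toLin,
      Matrix.det_fin_two_of, sub_neg_eq_add]
    ring
  have hinj : Set.InjOn polarCoord.symm polarCoord.target := by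
    have := polarCoord.symm.injOn
    rwa [polarCoord.symm_source] at this
  symm
  calc
    ∫⁻ p, g p = ∫⁻ p in polarCoord.source, g p := by
      rw [← setLIntegral_univ]
      exact setLIntegral_congr polarCoord_source_ae_eq_univ.symm
    _ = ∫⁻ p in polarCoord.symm '' polarCoord.target, g p := by
      rw [polarCoord.symm_image_target_eq_source]
    _ = ∫⁻ p in polarCoord.target, ENNReal.ofReal |(B p).det| * g (polarCoord.symm p) :=
      lintegral_image_eq_lintegral_abs_det_fderiv_mul volume
        polarCoord.open_target.measurableSet A hinj g
    _ = ∫⁻ p in polarCoord.target, ENNReal.ofReal p.1 * g (polarCoord.symm p) := by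
      refine setLIntegral_congr_fun polarCoord.open_target.measurableSet
        (fun p hp => ?_)
      rw [B_det, abs_of_pos hp.1]

theorem Complex.lintegral_comp_polarCoord_symm' (g : ℂ → ℝ≥0∞) :
    (∫⁻ p in polarCoord.target, ENNReal.ofReal p.1 * g (Complex.polarCoord.symm p)) =
      ∫⁻ z, g z := by
  rw [← (Complex.volume_preserving_equiv_real_prod.symm).lintegral_comp_emb
    Complex.measurableEquivRealProd.symm.measurableEmbedding, ← _root_.lintegral_comp_polarCoord_symm' fun p => g (Complex.measurableEquivRealProd.symm p)]
  rfl

theorem continuous_complexPolarCoord_symm :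
    Continuous fun p : ℝ × ℝ => Complex.polarCoord.symm p := by
  simp only [Complex.polarCoord_symm_apply]
  fun_prop

/-- Transfer integrability through polar coordinates. -/
theorem integrableOn_polar_of_integrable {f : ℂ → ℝ} (hm : Measurable f)
    (hf : Integrable f) :
    IntegrableOn (fun p : ℝ × ℝ => p.1 • f (Complex.polarCoord.symm p)) polarCoord.target := by
  constructor
  · exact (measurable_fst.smul
      (hm.comp continuous_complexPolarCoord_symm.measurable)).aestronglyMeasurable
  · rw [hasFiniteIntegral_def]
    have : ∀ᵐ p ∂(volume.restrict polarCoord.target),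
        ‖p.1 • f (Complex.polarCoord.symm p)‖ₑ
          = ENNReal.ofReal p.1 * ‖f (Complex.polarCoord.symm p)‖ₑ := by
      refine ae_restrict_iff' (polarCoord.open_target.measurableSet) |>.2
        (Filter.Eventually.of_forall fun p hp => ?_)
      rw [smul_eq_mul, enorm_mul, Real.enorm_of_nonneg hp.1.le]
    rw [lintegral_congr_ae this,
      Complex.lintegral_comp_polarCoord_symm' fun z => ‖f z‖ₑ]
    exact hf.2

theorem integrable_gauss_complex {b : ℝ} (hb : 0 < b) :
    Integrable fun z : ℂ => Real.exp (-b * ‖z‖ ^ 2) := by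
  rw [← (Complex.volume_preserving_equiv_real_prod.symm).integrable_comp_emb
    Complex.measurableEquivRealProd.symm.measurableEmbedding]
  have : ((fun z : ℂ => Real.exp (-b * ‖z‖ ^ 2)) ∘
      Complex.measurableEquivRealProd.symm)
      = fun p : ℝ × ℝ => Real.exp (-b * p.1 ^ 2) * Real.exp (-b * p.2 ^ 2) := by
    ext p
    have h1 : (Complex.measurableEquivRealProd.symm p : ℂ) = Complex.mk p.1 p.2 := rfl
    simp only [Function.comp_apply, ← Real.exp_add, Complex.sq_norm, h1]
    rw [Complex.normSq_mk]
    ring_nf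
  rw [this, Measure.volume_eq_prod]
  exact (integrable_exp_neg_mul_sq hb).mul_prod (integrable_exp_neg_mul_sq hb)

theorem integrableOn_inv_abs_ball :
    IntegrableOn (fun z : ℂ => (‖z‖)⁻¹) (Metric.ball (0 : ℂ) 1) := by
  constructor
  · exact (continuous_norm.measurable.inv).aestronglyMeasurable
  · rw [hasFiniteIntegral_def]
    have hle : (∫⁻ z in Metric.ball (0 : ℂ) 1, (‖(‖z‖)⁻¹‖₊ : ℝ≥0∞))
        ≤ ∫⁻ z, (Metric.ball (0 : ℂ) 1).indicator
            (fun z => ENNReal.ofReal (‖z‖)⁻¹) z := by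
      rw [lintegral_indicator measurableSet_ball]
      refine setLIntegral_mono' measurableSet_ball fun z _ => ?_
      rw [ENNReal.ofReal, Real.nnnorm_of_nonneg (by positivity)]
      exact le_of_eq (by congr 1; ext; simp [Real.coe_toNNReal _ (by positivity : (0:ℝ) ≤ (‖z‖)⁻¹)])
    refine lt_of_le_of_lt hle ?_
    rw [← Complex.lintegral_comp_polarCoord_symm']
    have heq : ∀ p ∈ polarCoord.target,
        ENNReal.ofReal p.1 * (Metric.ball (0 : ℂ) 1).indicator
          (fun z => ENNReal.ofReal (‖z‖)⁻¹) (Complex.polarCoord.symm p)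
        = (Ioo (0:ℝ) 1 ×ˢ univ).indicator (fun _ => (1 : ℝ≥0∞)) p := by
      rintro ⟨r, θ⟩ hp
      have hr : 0 < r := hp.1
      have habs : ‖Complex.polarCoord.symm (r, θ)‖ = r := by
        rw [Complex.norm_polarCoord_symm, abs_of_pos hr]
      by_cases h1 : r < 1
      · rw [Set.indicator_of_mem, Set.indicator_of_mem]
        · rw [habs, ← ENNReal.ofReal_mul hr.le, mul_inv_cancel₀ hr.ne', ENNReal.ofReal_one]
        · exact ⟨⟨hr, h1⟩, trivial⟩
        · simp only [Metric.mem_ball, Complex.dist_eq, sub_zero, habs]; exact h1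
      · rw [Set.indicator_of_notMem, Set.indicator_of_notMem, mul_zero]
        · rintro ⟨⟨_, h⟩, -⟩; exact h1 h
        · simp only [Metric.mem_ball, Complex.dist_eq, sub_zero, habs]; exact h1
    rw [setLIntegral_congr_fun polarCoord.open_target.measurableSet
      heq]
    rw [lintegral_indicator (measurableSet_Ioo.prod MeasurableSet.univ),
      setLIntegral_one, Measure.restrict_apply (measurableSet_Ioo.prod MeasurableSet.univ),
      polarCoord_target, Set.prod_inter_prod, Set.univ_inter, Measure.volume_eq_prod,
      Measure.prod_prod]
    have : Ioo (0:ℝ) 1 ∩ Ioi 0 = Ioo 0 1 := inter_eq_left.2 Ioo_subset_Ioi_self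
    rw [this, Real.volume_Ioo, Real.volume_Ioo]
    exact ENNReal.mul_lt_top ENNReal.ofReal_lt_top ENNReal.ofReal_lt_top

theorem mem_slitPlane_one_add {a z : ℂ} (ha : ‖a‖ < 1)
    (hz : ‖z‖ ≤ 1) : 1 + a * z ∈ Complex.slitPlane := by
  rw [Complex.mem_slitPlane_iff]
  left
  have h1 : ‖a * z‖ < 1 := by
    rw [norm_mul]
    calc ‖a‖ * ‖z‖ ≤ ‖a‖ * 1 :=
          mul_le_mul_of_nonneg_left hz (norm_nonneg a)
      _ = ‖a‖ := mul_one _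
      _ < 1 := ha
  have h2 : -‖a * z‖ ≤ (a * z).re := (abs_le.1 (Complex.abs_re_le_norm _)).1
  have : (1 + a * z).re = 1 + (a * z).re := by simp
  rw [this]
  linarith

theorem integral_log_abs_one_add_circle {a : ℂ} (ha : ‖a‖ < 1) :
    (∫ θ in (0 : ℝ)..(2 * π), Real.log (‖1 + a * Complex.exp (θ * Complex.I)‖)) = 0 := by
  set f : ℂ → ℂ := fun z => Complex.log (1 + a * z) with hf
  have hcont : ContinuousOn f (Metric.closedBall (0 : ℂ) 1) := by
    intro z hz
    have hz1 : ‖z‖ ≤ 1 := by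
      simpa [Complex.dist_eq] using Metric.mem_closedBall.1 hz
    exact (ContinuousAt.comp (x := z) (g := Complex.log) (f := fun z : ℂ => 1 + a * z)
      (continuousAt_clog (mem_slitPlane_one_add ha hz1)) (by fun_prop)).continuousWithinAt
  have hdiff : ∀ z ∈ Metric.ball (0 : ℂ) 1 \ (∅ : Set ℂ), DifferentiableAt ℂ f z := by
    rintro z ⟨hz, -⟩
    have hz1 : ‖z‖ ≤ 1 := by
      simpa [Complex.dist_eq] using (Metric.mem_ball.1 hz).le
    exact DifferentiableAt.clog (by fun_prop) (mem_slitPlane_one_add ha hz1)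
  have hcauchy := Complex.circleIntegral_sub_inv_smul_of_differentiable_on_off_countable
    (Set.countable_empty) (Metric.mem_ball_self one_pos) hcont hdiff
  have hf0 : f 0 = 0 := by simp [hf]
  rw [hf0, smul_zero] at hcauchy
  -- unfold the circle integral
  have hne : ∀ θ : ℝ, circleMap 0 1 θ ≠ 0 := fun θ => circleMap_ne_center one_ne_zero
  have hunfold : (∮ z in C((0:ℂ), 1), (z - 0)⁻¹ • f z)
      = ∫ θ in (0:ℝ)..(2 * π), Complex.I * f (circleMap 0 1 θ) := by
    rw [circleIntegral]
    refine intervalIntegral.integral_congr fun θ _ => ?_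
    rw [deriv_circleMap]
    have h0 : circleMap 0 1 θ ≠ 0 := hne θ
    field_simp [smul_eq_mul]
    rw [smul_eq_mul, smul_eq_mul, sub_zero, one_div, ← mul_assoc, mul_assoc (circleMap 0 1 θ),
      mul_comm Complex.I, ← mul_assoc, mul_inv_cancel₀ h0, one_mul]
  rw [hunfold] at hcauchy
  have hcm : ∀ θ : ℝ, circleMap 0 1 θ = Complex.exp (θ * Complex.I) := fun θ => by
    rw [circleMap_zero, Complex.ofReal_one, one_mul]
  have hIcont : Continuous fun θ : ℝ => f (circleMap 0 1 θ) := by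
    rw [continuous_iff_continuousAt]
    intro θ
    have h1 : ‖circleMap 0 1 θ‖ ≤ 1 := by
      rw [norm_circleMap_zero]; simp
    exact (ContinuousAt.comp (x := circleMap 0 1 θ) (g := Complex.log)
      (f := fun z : ℂ => 1 + a * z)
      (continuousAt_clog (mem_slitPlane_one_add ha h1)) (by fun_prop)).comp
      (continuous_circleMap 0 1).continuousAt
  have hint : IntervalIntegrable (fun θ : ℝ => f (circleMap 0 1 θ)) volume 0 (2 * π) :=
    hIcont.intervalIntegrable _ _
  have hIzero : (∫ θ in (0:ℝ)..(2 * π), f (circleMap 0 1 θ)) = 0 := by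
    have := hcauchy
    rw [show (fun θ : ℝ => Complex.I * f (circleMap 0 1 θ))
        = fun θ : ℝ => Complex.I • f (circleMap 0 1 θ) from rfl] at this
    rw [intervalIntegral.integral_smul] at this
    have hI : (Complex.I : ℂ) ≠ 0 := Complex.I_ne_zero
    exact (smul_eq_zero.1 this).resolve_left hI
  have hre : (∫ θ in (0:ℝ)..(2 * π), (f (circleMap 0 1 θ)).re) = 0 := by
    have h2 := Complex.reCLM.intervalIntegral_comp_comm (a := (0:ℝ)) (b := 2 * π) hint
    simp only [Complex.reCLM_apply] at h2
    rw [h2, hIzero, Complex.zero_re]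
  have hcongr : (∫ θ in (0:ℝ)..(2 * π), Real.log (‖1 + a * Complex.exp (θ * Complex.I)‖))
      = ∫ θ in (0:ℝ)..(2 * π), (f (circleMap 0 1 θ)).re := by
    refine intervalIntegral.integral_congr fun θ _ => ?_
    simp only [hf, Complex.log_re, hcm θ]
  rw [hcongr, hre]

theorem one_add_mul_exp_ne_zero {a : ℂ} (ha : ‖a‖ < 1) (θ : ℝ) :
    1 + a * Complex.exp (θ * Complex.I) ≠ 0 := by
  intro h
  have h1 : a * Complex.exp (θ * Complex.I) = -1 := by linear_combination h
  have h2 : ‖a * Complex.exp (θ * Complex.I)‖ = 1 := by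
    rw [h1]; simp
  rw [norm_mul, Complex.norm_exp_ofReal_mul_I, mul_one] at h2
  rw [h2] at ha; exact lt_irrefl _ ha

theorem continuous_log_abs_one_add {a : ℂ} (ha : ‖a‖ < 1) :
    Continuous fun θ : ℝ => Real.log (‖1 + a * Complex.exp (θ * Complex.I)‖) := by
  refine Continuous.log (continuous_norm.comp (by fun_prop)) fun θ => ?_
  simpa using one_add_mul_exp_ne_zero ha θ

theorem integral_log_abs_circle (d : ℂ) (hd : d ≠ 0) {r : ℝ} (hr : 0 < r)
    (hne : r ≠ ‖d‖) :
    (∫ θ in (0:ℝ)..(2 * π), Real.log (‖d + r * Complex.exp (θ * Complex.I)‖))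
      = 2 * π * Real.log (max (‖d‖) r) := by
  have habsd : 0 < ‖d‖ := norm_pos_iff.mpr hd
  rcases lt_or_gt_of_ne hne with hlt | hgt
  · -- r < |d|
    set a : ℂ := (r : ℂ) / d with hadef
    have haabs : ‖a‖ = r / ‖d‖ := by
      rw [hadef, norm_div, Complex.norm_of_nonneg hr.le]
    have ha : ‖a‖ < 1 := by
      rw [haabs, div_lt_one habsd]; exact hlt
    have habs : ∀ θ : ℝ, ‖d + r * Complex.exp (θ * Complex.I)‖
        = ‖d‖ * ‖1 + a * Complex.exp (θ * Complex.I)‖ := by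
      intro θ
      rw [← norm_mul]
      congr 1
      rw [hadef]
      field_simp
    have hlog : ∀ θ : ℝ, Real.log (‖d + r * Complex.exp (θ * Complex.I)‖)
        = Real.log (‖d‖)
          + Real.log (‖1 + a * Complex.exp (θ * Complex.I)‖) := by
      intro θ
      rw [habs θ, Real.log_mul habsd.ne' (by simpa using one_add_mul_exp_ne_zero ha θ)]
    rw [intervalIntegral.integral_congr fun θ _ => hlog θ,
      intervalIntegral.integral_add (intervalIntegrable_const)
        ((continuous_log_abs_one_add ha).intervalIntegrable _ _),
      integral_log_abs_one_add_circle ha, add_zero, intervalIntegral.integral_const,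
      max_eq_left hlt.le]
    simp [smul_eq_mul]
  · -- |d| < r
    set a : ℂ := (starRingEnd ℂ) d / r with hadef
    have haabs : ‖a‖ = ‖d‖ / r := by
      rw [hadef, norm_div, Complex.norm_conj, Complex.norm_of_nonneg hr.le]
    have ha : ‖a‖ < 1 := by
      rw [haabs, div_lt_one hr]; exact hgt
    have habs : ∀ θ : ℝ, ‖d + r * Complex.exp (θ * Complex.I)‖
        = r * ‖1 + a * Complex.exp (θ * Complex.I)‖ := by
      intro θ
      have hEE : Complex.exp (θ * Complex.I) * Complex.exp (-(θ * Complex.I)) = 1 := by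
        rw [← Complex.exp_add]; simp
      have h1 : d + r * Complex.exp (θ * Complex.I)
          = (r * Complex.exp (θ * Complex.I))
            * (1 + (d / r) * Complex.exp (-(θ * Complex.I))) := by
        have hrne : (r : ℂ) ≠ 0 := by exact_mod_cast hr.ne'
        field_simp
        linear_combination (-d) * hEE
      rw [h1, norm_mul, norm_mul, Complex.norm_of_nonneg hr.le,
        Complex.norm_exp_ofReal_mul_I, mul_one]
      congr 1
      rw [← Complex.norm_conj (1 + d / r * Complex.exp (-(θ * Complex.I)))]
      congr 1
      rw [map_add, map_one, map_mul, map_div₀, ← Complex.exp_conj]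
      congr 2
      · rw [Complex.conj_ofReal]
      · rw [map_neg, map_mul, Complex.conj_ofReal, Complex.conj_I]
        ring
    have hlog : ∀ θ : ℝ, Real.log (‖d + r * Complex.exp (θ * Complex.I)‖)
        = Real.log r
          + Real.log (‖1 + a * Complex.exp (θ * Complex.I)‖) := by
      intro θ
      rw [habs θ, Real.log_mul hr.ne' (by simpa using one_add_mul_exp_ne_zero ha θ)]
    rw [intervalIntegral.integral_congr fun θ _ => hlog θ,
      intervalIntegral.integral_add (intervalIntegrable_const)
        ((continuous_log_abs_one_add ha).intervalIntegrable _ _),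
      integral_log_abs_one_add_circle ha, add_zero, intervalIntegral.integral_const,
      max_eq_right hgt.le]
    simp [smul_eq_mul]

theorem abs_log_sq_le {x : ℝ} (hx : 0 ≤ x) : |Real.log (x ^ 2)| ≤ x ^ 2 + 2 / x := by
  rcases hx.eq_or_lt with h | h
  · simp [← h]
  · rw [Real.log_pow]
    push_cast
    rcases le_or_gt 1 x with h1 | h1
    · have hl : 0 ≤ Real.log x := Real.log_nonneg h1
      rw [abs_of_nonneg (by positivity)]
      have : Real.log (x ^ 2) ≤ x ^ 2 - 1 := Real.log_le_sub_one_of_pos (by positivity)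
      rw [Real.log_pow] at this
      push_cast at this
      have : (2:ℝ) / x ≥ 0 := by positivity
      nlinarith
    · have hl : Real.log x < 0 := Real.log_neg h h1
      rw [abs_of_nonpos (by nlinarith)]
      have h2 : Real.log x⁻¹ ≤ x⁻¹ - 1 := Real.log_le_sub_one_of_pos (by positivity)
      rw [Real.log_inv] at h2
      have h3 : (0:ℝ) < x⁻¹ := by positivity
      have h4 : 2 / x = 2 * x⁻¹ := by rw [div_eq_mul_inv]
      nlinarith

theorem integrableOn_mul_exp_neg_Ioi : IntegrableOn (fun x : ℝ => x * Real.exp (-x)) (Ioi 0) := by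
  have h := integrableOn_rpow_mul_exp_neg_rpow (p := 1) (by norm_num : (-1:ℝ) < 1) one_pos
  refine h.congr_fun (fun x hx => ?_) measurableSet_Ioi
  norm_num

theorem integrableOn_exp_neg_mul_log {lam : ℝ} (hlam : 0 < lam) :
    IntegrableOn (fun u : ℝ => Real.exp (-u) * Real.log u) (Ioi lam) := by
  have hbound : IntegrableOn (fun u : ℝ => u * Real.exp (-u) + |Real.log lam| * Real.exp (-u))
      (Ioi lam) := by
    refine ((integrableOn_mul_exp_neg_Ioi.mono_set (Ioi_subset_Ioi hlam.le)).add
      (((exp_neg_integrableOn_Ioi lam one_pos).congr_fun (fun x _ => by norm_num)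
        measurableSet_Ioi).const_mul _))
  refine Integrable.mono' hbound
    ((Real.measurable_exp.comp measurable_neg).mul Real.measurable_log).aestronglyMeasurable ?_
  refine (ae_restrict_iff' measurableSet_Ioi).2 (Filter.Eventually.of_forall fun u hu => ?_)
  have hu0 : 0 < u := lt_trans hlam hu
  have hexp : 0 < Real.exp (-u) := Real.exp_pos _
  rw [Real.norm_eq_abs, abs_mul, abs_of_pos hexp]
  have hlog : |Real.log u| ≤ u + |Real.log lam| := by
    rcases le_or_gt 1 u with h1 | h1
    · rw [abs_of_nonneg (Real.log_nonneg h1)]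
      have := Real.log_le_sub_one_of_pos hu0
      have : (0:ℝ) ≤ |Real.log lam| := abs_nonneg _
      nlinarith [Real.log_le_sub_one_of_pos hu0]
    · rw [abs_of_nonpos (Real.log_nonpos hu0.le h1.le)]
      have hmono : Real.log lam ≤ Real.log u := Real.log_le_log hlam (le_of_lt hu)
      have : -Real.log lam ≤ |Real.log lam| := neg_le_abs _
      nlinarith
  calc Real.exp (-u) * |Real.log u| ≤ Real.exp (-u) * (u + |Real.log lam|) := by
        exact mul_le_mul_of_nonneg_left hlog hexp.le
    _ = u * Real.exp (-u) + |Real.log lam| * Real.exp (-u) := by ring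

theorem integrableOn_exp_neg_div_Ioi {lam : ℝ} (hlam : 0 < lam) :
    IntegrableOn (fun u : ℝ => Real.exp (-u) / u) (Ioi lam) := by
  have hbound : IntegrableOn (fun u : ℝ => lam⁻¹ * Real.exp (-u)) (Ioi lam) :=
    ((exp_neg_integrableOn_Ioi lam one_pos).congr_fun (fun x _ => by norm_num)
      measurableSet_Ioi).const_mul _
  refine Integrable.mono' hbound
    ((Real.measurable_exp.comp measurable_neg).div measurable_id).aestronglyMeasurable ?_
  refine (ae_restrict_iff' measurableSet_Ioi).2 (Filter.Eventually.of_forall fun u hu => ?_)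
  have hu0 : 0 < u := lt_trans hlam hu
  rw [Real.norm_eq_abs, abs_div, abs_of_pos (Real.exp_pos _), abs_of_pos hu0, div_le_iff₀ hu0]
  rw [mul_comm lam⁻¹, mul_assoc]
  refine le_mul_of_one_le_right (Real.exp_pos _).le ?_
  rw [← div_eq_inv_mul, le_div_iff₀ hlam, one_mul]
  exact hu.le

theorem tail_integral_exp_log {lam : ℝ} (hlam : 0 < lam) :
    (∫ u in Ioi lam, Real.exp (-u) * Real.log u)
      = Real.exp (-lam) * Real.log lam + ∫ t in Ioi lam, Real.exp (-t) / t := by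
  set F : ℝ → ℝ := fun u => -(Real.exp (-u) * Real.log u) with hF
  have hderiv : ∀ u ∈ Ioi lam, HasDerivAt F
      (Real.exp (-u) * Real.log u - Real.exp (-u) / u) u := by
    intro u hu
    have hu0 : 0 < u := lt_trans hlam hu
    have h1 : HasDerivAt (fun u : ℝ => Real.exp (-u)) (-Real.exp (-u)) u := by
      simpa using (hasDerivAt_neg u).exp
    have h2 : HasDerivAt Real.log u⁻¹ u := Real.hasDerivAt_log hu0.ne'
    have h3 := (h1.mul h2).neg
    have h4 : F = -((fun u : ℝ => Real.exp (-u)) * Real.log) := by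
      ext x; simp [hF]
    rw [h4]
    exact h3.congr_deriv (by ring)
  have hcont : ContinuousOn F (Ici lam) := by
    intro u hu
    have hu0 : 0 < u := lt_of_lt_of_le hlam hu
    exact (((Real.continuous_exp.comp continuous_neg).continuousAt.mul
      (Real.continuousAt_log hu0.ne')).neg).continuousWithinAt
  have hint : IntegrableOn
      (fun u => Real.exp (-u) * Real.log u - Real.exp (-u) / u) (Ioi lam) :=
    (integrableOn_exp_neg_mul_log hlam).sub (integrableOn_exp_neg_div_Ioi hlam)
  have htend : Filter.Tendsto F Filter.atTop (nhds 0) := by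
    have h1 : Filter.Tendsto (fun u : ℝ => Real.exp (-u) * Real.log u)
        Filter.atTop (nhds 0) := by
      have hsq : ∀ᶠ u in Filter.atTop, Real.exp (-u) * Real.log u ≤ u * Real.exp (-u) := by
        filter_upwards [Filter.eventually_ge_atTop (1:ℝ)] with u hu
        have := Real.log_le_sub_one_of_pos (by linarith : (0:ℝ) < u)
        have hexp := (Real.exp_pos (-u)).le
        nlinarith
      have hsq2 : ∀ᶠ u in Filter.atTop, 0 ≤ Real.exp (-u) * Real.log u := by
        filter_upwards [Filter.eventually_ge_atTop (1:ℝ)] with u hu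
        have := Real.log_nonneg hu
        positivity
      have hu : Filter.Tendsto (fun u : ℝ => u * Real.exp (-u)) Filter.atTop (nhds 0) := by
        simpa using tendsto_pow_mul_exp_neg_atTop_nhds_zero 1
      exact squeeze_zero' hsq2 hsq hu
    simpa [hF] using h1.neg
  have key := integral_Ioi_of_hasDerivAt_of_tendsto (hcont lam Set.self_mem_Ici) hderiv hint htend
  have hFlam : F lam = -(Real.exp (-lam) * Real.log lam) := rfl
  rw [hFlam] at key
  have hsplit := integral_sub (integrableOn_exp_neg_mul_log hlam)
    (integrableOn_exp_neg_div_Ioi hlam)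
  rw [hsplit] at key
  linarith [key]

theorem integral_exp_neg_log_max {lam : ℝ} (hlam : 0 < lam) :
    (∫ u in Ioi (0:ℝ), Real.exp (-u) * Real.log (max lam u))
      = Real.log lam + ∫ t in Ioi lam, Real.exp (-t) / t := by
  have hunion : Ioc (0:ℝ) lam ∪ Ioi lam = Ioi 0 := Ioc_union_Ioi_eq_Ioi hlam.le
  have hdisj : Disjoint (Ioc (0:ℝ) lam) (Ioi lam) := Ioc_disjoint_Ioi le_rfl
  have hint1 : IntegrableOn (fun u : ℝ => Real.exp (-u) * Real.log (max lam u))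
      (Ioc 0 lam) := by
    refine IntegrableOn.congr_fun ?_ (fun u hu => by rw [max_eq_left hu.2]) measurableSet_Ioc
    exact ((Real.continuous_exp.comp continuous_neg).mul continuous_const).integrableOn_Ioc
  have hint2 : IntegrableOn (fun u : ℝ => Real.exp (-u) * Real.log (max lam u))
      (Ioi lam) := by
    refine IntegrableOn.congr_fun (integrableOn_exp_neg_mul_log hlam)
      (fun u hu => by rw [max_eq_right (le_of_lt hu)]) measurableSet_Ioi
  rw [← hunion, setIntegral_union hdisj measurableSet_Ioi hint1 hint2]
  have h1 : (∫ u in Ioc (0:ℝ) lam, Real.exp (-u) * Real.log (max lam u))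
      = (1 - Real.exp (-lam)) * Real.log lam := by
    rw [setIntegral_congr_fun measurableSet_Ioc
      (fun u hu => by rw [max_eq_left hu.2])]
    rw [← intervalIntegral.integral_of_le hlam.le]
    rw [intervalIntegral.integral_mul_const]
    congr 1
    rw [intervalIntegral.integral_comp_neg fun x => Real.exp x]
    rw [integral_exp]
    simp
  have h2 : (∫ u in Ioi lam, Real.exp (-u) * Real.log (max lam u))
      = Real.exp (-lam) * Real.log lam + ∫ t in Ioi lam, Real.exp (-t) / t := by
    rw [setIntegral_congr_fun measurableSet_Ioi
      (fun u hu => by rw [max_eq_right (le_of_lt hu)])]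
    exact tail_integral_exp_log hlam
  rw [h1, h2]
  ring


theorem inner_integral_eq (d : ℂ) (hd : d ≠ 0) {r : ℝ} (hr : 0 < r)
    (hner : r ≠ ‖d‖) :
    (∫ θ in Ioo (-π) π, r • (gaussDensity 1 (Complex.polarCoord.symm (r, θ))
        * Real.log (‖d + Complex.polarCoord.symm (r, θ)‖ ^ 2)))
      = (2 * r * Real.exp (-(r ^ 2))) * Real.log (max (‖d‖ ^ 2) (r ^ 2)) := by
  have hsymm : ∀ θ : ℝ, Complex.polarCoord.symm (r, θ) = r * Complex.exp (θ * Complex.I) := by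
    intro θ
    rw [Complex.polarCoord_symm_apply, Complex.exp_mul_I, ← Complex.ofReal_cos,
      ← Complex.ofReal_sin]
  have habs : ∀ θ : ℝ, ‖(r : ℂ) * Complex.exp (θ * Complex.I)‖ = r := by
    intro θ
    rw [norm_mul, Complex.norm_exp_ofReal_mul_I, mul_one, Complex.norm_of_nonneg hr.le]
  have hgd : ∀ θ : ℝ, gaussDensity 1 (Complex.polarCoord.symm (r, θ))
      = π⁻¹ * Real.exp (-(r ^ 2)) := by
    intro θ
    rw [gaussDensity, hsymm θ, habs θ, mul_one, div_one]
  have hstep : ∀ θ : ℝ, r • (gaussDensity 1 (Complex.polarCoord.symm (r, θ))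
        * Real.log (‖d + Complex.polarCoord.symm (r, θ)‖ ^ 2))
      = (2 * r * π⁻¹ * Real.exp (-(r ^ 2)))
        * Real.log (‖d + r * Complex.exp (θ * Complex.I)‖) := by
    intro θ
    rw [hgd θ, hsymm θ, smul_eq_mul, Real.log_pow]
    push_cast
    ring
  rw [setIntegral_congr_fun measurableSet_Ioo fun θ _ => hstep θ, integral_const_mul]
  have hIoo : (∫ θ in Ioo (-π) π, Real.log (‖d + r * Complex.exp (θ * Complex.I)‖))
      = ∫ θ in (0:ℝ)..(2 * π), Real.log (‖d + r * Complex.exp (θ * Complex.I)‖) := by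
    rw [← integral_Ioc_eq_integral_Ioo,
      ← intervalIntegral.integral_of_le (by linarith [pi_pos] : -π ≤ π)]
    have hper : Function.Periodic
        (fun θ : ℝ => Real.log (‖d + r * Complex.exp (θ * Complex.I)‖)) (2 * π) := by
      intro θ
      simp only []
      congr 3
      push_cast
      rw [add_mul, Complex.exp_add]
      rw [show ((2:ℂ) * π * Complex.I) = 2 * π * Complex.I by ring, Complex.exp_two_pi_mul_I,
        mul_one]
    have h := hper.intervalIntegral_add_eq (-π) 0
    rw [show -π + 2 * π = π by ring, zero_add] at h
    exact h
  rw [hIoo, integral_log_abs_circle d hd hr hner]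
  have hmaxsq : Real.log (max (‖d‖ ^ 2) (r ^ 2))
      = 2 * Real.log (max (‖d‖) r) := by
    have habs0 : 0 ≤ ‖d‖ := norm_nonneg d
    have h2 : (max (‖d‖) r) ^ 2 = max (‖d‖ ^ 2) (r ^ 2) := by
      rcases le_total (‖d‖) r with h | h
      · rw [max_eq_right h, max_eq_right (by nlinarith)]
      · rw [max_eq_left h, max_eq_left (by nlinarith)]
    rw [← h2, Real.log_pow]
    push_cast
    ring
  rw [hmaxsq]
  field_simp


/-- For a scalar circularly symmetric complex Gaussian `H` with mean
`d ≠ 0` and unit variance, `E[log |H|²] = log |d|² − Ei (−|d|²)`. -/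
theorem expectation_log_abs_sq_gaussian {Ω : Type*} [MeasurableSpace Ω]
    (μ : Measure Ω) [IsProbabilityMeasure μ] (H : Ω → ℂ) (d : ℂ) (hd : d ≠ 0)
    (hH : Measure.map H μ = Measure.map (fun w => d + w) (complexGaussian 1)) :
    ∫ ω, Real.log ((‖H ω‖) ^ 2) ∂μ =
      Real.log ((‖d‖) ^ 2) - Ei (-(‖d‖) ^ 2) := by
  have habsd : 0 < ‖d‖ := norm_pos_iff.mpr hd
  set lam : ℝ := ‖d‖ ^ 2 with hlam_def
  have hlam : 0 < lam := by positivity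
  have hgd_meas : Measurable fun z : ℂ => gaussDensity 1 z := by
    unfold gaussDensity
    exact measurable_const.mul (Real.measurable_exp.comp
      ((continuous_norm.measurable.pow_const 2).neg.div_const 1))
  have hf_meas : Measurable fun z : ℂ => Real.log (‖z‖ ^ 2) :=
    Real.measurable_log.comp (continuous_norm.measurable.pow_const 2)
  -- H is a.e.-measurable
  have hνne : complexGaussian 1 ≠ 0 := by
    intro h0
    have h1 : (complexGaussian 1) univ = 0 := by rw [h0]; rfl
    rw [complexGaussian, withDensity_apply _ MeasurableSet.univ,
      Measure.restrict_univ] at h1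
    rw [lintegral_eq_zero_iff hgd_meas.ennreal_ofReal] at h1
    have h2 : {z : ℂ | ¬ (ENNReal.ofReal (gaussDensity 1 z) = 0)} = univ := by
      ext z
      simp only [mem_setOf_eq, mem_univ, iff_true]
      rw [ENNReal.ofReal_eq_zero, not_le]
      unfold gaussDensity
      positivity
    have h3 := h1
    rw [Filter.EventuallyEq, ae_iff] at h3
    simp only [Pi.zero_apply] at h3
    rw [h2] at h3
    exact (NeZero.ne (volume : Measure ℂ)) (Measure.measure_univ_eq_zero.1 h3)
  have hHmeas : AEMeasurable H μ := by
    by_contra hc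
    rw [Measure.map_of_not_aemeasurable hc] at hH
    have h1 : (Measure.map (fun w => d + w) (complexGaussian 1)) univ = 0 := by
      rw [← hH]; rfl
    rw [Measure.map_apply (measurable_const_add d) MeasurableSet.univ,
      preimage_univ] at h1
    exact hνne (Measure.measure_univ_eq_zero.1 h1)
  -- push forward
  have step1 : (∫ ω, Real.log (‖H ω‖ ^ 2) ∂μ)
      = ∫ z, Real.log (‖z‖ ^ 2) ∂(Measure.map H μ) :=
    (integral_map hHmeas hf_meas.aestronglyMeasurable).symm
  rw [step1, hH,
    integral_map (measurable_const_add d).aemeasurable hf_meas.aestronglyMeasurable]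
  -- with-density
  set G : ℂ → ℝ := fun w => gaussDensity 1 w * Real.log (‖d + w‖ ^ 2) with hG_def
  have hstep2 : (∫ w, Real.log (‖d + w‖ ^ 2) ∂(complexGaussian 1)) = ∫ w, G w := by
    have hmeq : complexGaussian 1
        = volume.withDensity fun z => ((gaussDensity 1 z).toNNReal : ℝ≥0∞) := rfl
    rw [hmeq, integral_withDensity_eq_integral_smul hgd_meas.real_toNNReal]
    refine integral_congr_ae (Filter.Eventually.of_forall fun w => ?_)
    dsimp only
    rw [NNReal.smul_def, Real.coe_toNNReal _ (by unfold gaussDensity; positivity),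
      smul_eq_mul]
  rw [hstep2]
  -- integrability of G
  have hGmeas : Measurable G :=
    hgd_meas.mul (Real.measurable_log.comp
      ((continuous_norm.measurable.comp (measurable_const_add d)).pow_const 2))
  have hB1 : Integrable fun w : ℂ =>
      Real.exp (-‖w‖ ^ 2) * ‖d + w‖ ^ 2 := by
    have hbd : Integrable fun w : ℂ =>
        2 * lam * Real.exp (-(1:ℝ) * ‖w‖ ^ 2)
          + 4 * Real.exp (-(1/2 : ℝ) * ‖w‖ ^ 2) :=
      (((integrable_gauss_complex one_pos).const_mul (2 * lam)).add
        ((integrable_gauss_complex (by norm_num : (0:ℝ) < 1/2)).const_mul 4))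
    refine Integrable.mono' hbd
      ((Real.measurable_exp.comp (continuous_norm.measurable.pow_const 2).neg).mul
        ((continuous_norm.measurable.comp (measurable_const_add d)).pow_const
          2)).aestronglyMeasurable
      (Filter.Eventually.of_forall fun w => ?_)
    set t := ‖w‖ with ht
    set x := ‖d + w‖ with hx
    have ht0 : 0 ≤ t := norm_nonneg w
    have hx0 : 0 ≤ x := norm_nonneg _
    have htri : x ≤ ‖d‖ + t := by
      rw [hx, ht]; exact norm_add_le d w
    have hexp1 : t ^ 2 ≤ 2 * Real.exp (t ^ 2 / 2) := by
      nlinarith [Real.add_one_le_exp (t ^ 2 / 2)]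
    have hexpmul : Real.exp (t ^ 2 / 2) * Real.exp (-t ^ 2) = Real.exp (-(1/2 : ℝ) * t ^ 2) := by
      rw [← Real.exp_add]; ring_nf
    have hexp2 : t ^ 2 * Real.exp (-t ^ 2) ≤ 2 * Real.exp (-(1/2 : ℝ) * t ^ 2) := by
      calc t ^ 2 * Real.exp (-t ^ 2) ≤ (2 * Real.exp (t ^ 2 / 2)) * Real.exp (-t ^ 2) :=
            mul_le_mul_of_nonneg_right hexp1 (Real.exp_pos _).le
        _ = 2 * Real.exp (-(1/2 : ℝ) * t ^ 2) := by rw [mul_assoc, hexpmul]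
    have hepos := (Real.exp_pos (-t ^ 2)).le
    rw [Real.norm_eq_abs, abs_of_nonneg (by positivity)]
    have hx2 : x ^ 2 ≤ 2 * lam + 2 * t ^ 2 := by
      rw [hlam_def]
      have hsq : x ^ 2 ≤ (‖d‖ + t) ^ 2 := by nlinarith [norm_nonneg d]
      nlinarith [sq_nonneg (‖d‖ - t)]
    have hone : Real.exp (-(1:ℝ) * t ^ 2) = Real.exp (-t ^ 2) := by norm_num
    rw [hone]
    nlinarith [mul_le_mul_of_nonneg_left hx2 hepos]
  have hB2 : Integrable fun w : ℂ =>
      Real.exp (-‖w‖ ^ 2) * (2 / ‖d + w‖) := by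
    have hmeasB2 : Measurable fun w : ℂ =>
        Real.exp (-‖w‖ ^ 2) * (2 / ‖d + w‖) :=
      (Real.measurable_exp.comp (continuous_norm.measurable.pow_const 2).neg).mul
        ((measurable_const.div
          (continuous_norm.measurable.comp (measurable_const_add d))))
    rw [← integrableOn_univ, ← union_compl_self (Metric.ball (-d : ℂ) 1)]
    refine IntegrableOn.union ?_ ?_
    · -- near the singularity
      have htrans : IntegrableOn (fun w : ℂ => (‖w + d‖)⁻¹)
          (Metric.ball (-d : ℂ) 1) := by
        have hg : Integrable fun z : ℂ =>
            (Metric.ball (0:ℂ) 1).indicator (fun z => (‖z‖)⁻¹) z := by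
          rw [integrable_indicator_iff measurableSet_ball]
          exact integrableOn_inv_abs_ball
        have hshift := hg.comp_add_right d
        have heq : (fun w : ℂ => (Metric.ball (0:ℂ) 1).indicator
            (fun z => (‖z‖)⁻¹) (w + d))
            = fun w : ℂ => (Metric.ball (-d : ℂ) 1).indicator
              (fun w => (‖w + d‖)⁻¹) w := by
          ext w
          by_cases hw : w ∈ Metric.ball (-d : ℂ) 1
          · have hw' : w + d ∈ Metric.ball (0:ℂ) 1 := by
              rw [Metric.mem_ball, Complex.dist_eq] at hw ⊢
              convert hw using 2
              ring
            rw [indicator_of_mem hw', indicator_of_mem hw]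
          · have hw' : w + d ∉ Metric.ball (0:ℂ) 1 := by
              rw [Metric.mem_ball, Complex.dist_eq] at hw ⊢
              intro hcon; apply hw; convert hcon using 2; ring
            rw [indicator_of_notMem hw', indicator_of_notMem hw]
        rw [heq] at hshift
        rwa [integrable_indicator_iff measurableSet_ball] at hshift
      refine Integrable.mono' (htrans.const_mul 2) hmeasB2.aestronglyMeasurable ?_
      refine (ae_restrict_iff' measurableSet_ball).2 (Filter.Eventually.of_forall fun w _ => ?_)
      have h1 : Real.exp (-‖w‖ ^ 2) ≤ 1 := by
        rw [Real.exp_le_one_iff]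
        simp only [neg_nonpos]
        positivity
      rw [Real.norm_eq_abs, abs_of_nonneg (by positivity)]
      have hcomm : ‖d + w‖ = ‖w + d‖ := by rw [add_comm]
      rw [hcomm, div_eq_mul_inv]
      have h2 : (0:ℝ) ≤ 2 * (‖w + d‖)⁻¹ := by positivity
      nlinarith
    · -- away from the singularity
      refine Integrable.mono' (((integrable_gauss_complex one_pos).const_mul 2).integrableOn)
        hmeasB2.aestronglyMeasurable ?_
      refine (ae_restrict_iff' measurableSet_ball.compl).2
        (Filter.Eventually.of_forall fun w hw => ?_)
      have hdist : 1 ≤ ‖d + w‖ := by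
        rw [mem_compl_iff, Metric.mem_ball, Complex.dist_eq, not_lt] at hw
        calc (1:ℝ) ≤ ‖w - -d‖ := hw
          _ = ‖d + w‖ := by congr 1; ring
      rw [Real.norm_eq_abs, abs_of_nonneg (by positivity)]
      have h2 : 2 / ‖d + w‖ ≤ 2 :=
        div_le_self (by norm_num) hdist
      have h3 : Real.exp (-(1:ℝ) * ‖w‖ ^ 2) = Real.exp (-‖w‖ ^ 2) := by
        norm_num
      rw [h3]
      nlinarith [(Real.exp_pos (-‖w‖ ^ 2)).le]
  have hGint : Integrable G := by
    refine Integrable.mono' ((hB1.add hB2).const_mul π⁻¹) hGmeas.aestronglyMeasurable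
      (Filter.Eventually.of_forall fun w => ?_)
    rw [hG_def]
    have hgd0 : 0 ≤ gaussDensity 1 w := by unfold gaussDensity; positivity
    have hgd_eq : gaussDensity 1 w = π⁻¹ * Real.exp (-‖w‖ ^ 2) := by
      unfold gaussDensity; rw [mul_one, div_one]
    rw [Real.norm_eq_abs, abs_mul, abs_of_nonneg hgd0, hgd_eq]
    have hlog := abs_log_sq_le (norm_nonneg (d + w))
    have hπ : (0:ℝ) < π⁻¹ := by positivity
    have hepos := (Real.exp_pos (-‖w‖ ^ 2)).le
    calc π⁻¹ * Real.exp (-‖w‖ ^ 2) * |Real.log (‖d + w‖ ^ 2)|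
        ≤ π⁻¹ * Real.exp (-‖w‖ ^ 2)
          * (‖d + w‖ ^ 2 + 2 / ‖d + w‖) := by
          refine mul_le_mul_of_nonneg_left hlog (by positivity)
      _ = π⁻¹ * (Real.exp (-‖w‖ ^ 2) * ‖d + w‖ ^ 2
          + Real.exp (-‖w‖ ^ 2) * (2 / ‖d + w‖)) := by ring
  -- polar coordinates
  rw [← Complex.integral_comp_polarCoord_symm G]
  have hFint : IntegrableOn (fun p : ℝ × ℝ => p.1 • G (Complex.polarCoord.symm p))
      polarCoord.target := integrableOn_polar_of_integrable hGmeas hGint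
  rw [polarCoord_target, Measure.volume_eq_prod] at hFint ⊢
  rw [setIntegral_prod _ hFint]
  -- inner integral
  have hne_ae : ∀ᵐ r : ℝ ∂volume, r ≠ ‖d‖ := by
    have h0 : (volume : Measure ℝ) {‖d‖} = 0 := measure_singleton _
    have hset : {r : ℝ | r ≠ ‖d‖}ᶜ = {‖d‖} := by
      ext r; simp [not_not]
    rw [Filter.eventually_iff, mem_ae_iff, hset]
    exact h0
  have houter : (∫ x in Ioi (0:ℝ), ∫ y in Ioo (-π) π,
      (x, y).1 • G (Complex.polarCoord.symm (x, y)))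
      = ∫ r in Ioi (0:ℝ), (2 * r * Real.exp (-(r ^ 2)))
          * Real.log (max (‖d‖ ^ 2) (r ^ 2)) := by
    refine setIntegral_congr_ae measurableSet_Ioi (hne_ae.mono fun r hrne hrIoi => ?_)
    simpa [hG_def] using inner_integral_eq d hd hrIoi hrne
  rw [houter]
  calc (∫ r in Ioi (0:ℝ), (2 * r * Real.exp (-(r ^ 2)))
          * Real.log (max (‖d‖ ^ 2) (r ^ 2)))
      = ∫ x in Ioi (0:ℝ), (2 * x ^ ((2:ℝ) - 1))
          • ((fun u => Real.exp (-u) * Real.log (max lam u)) (x ^ (2:ℝ))) := by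
        refine setIntegral_congr_fun measurableSet_Ioi fun r hr => ?_
        have hr0 : (0:ℝ) < r := hr
        have h1 : r ^ ((2:ℝ) - 1) = r := by norm_num
        have h2 : r ^ (2:ℝ) = r ^ 2 := by
          rw [show (2:ℝ) = ((2:ℕ):ℝ) by norm_num, Real.rpow_natCast]
        dsimp only
        rw [h1, h2, smul_eq_mul, ← hlam_def]
        ring
    _ = ∫ u in Ioi (0:ℝ), Real.exp (-u) * Real.log (max lam u) :=
        integral_comp_rpow_Ioi_of_pos (g := fun u => Real.exp (-u) * Real.log (max lam u)) two_pos
    _ = Real.log lam + ∫ t in Ioi lam, Real.exp (-t) / t := integral_exp_neg_log_max hlam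
    _ = Real.log lam - Ei (-lam) := by
        rw [Ei, neg_neg, sub_neg_eq_add]
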